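/- Fix m ≥ 1 and let T be an m-binary tree of size nm. Every nonempty m-binary tree decomposes uniquely into m-binary trees T_L, T_{R_1}, …, T_{R_m} as in the recursive definition; define B^(m)_∅ = 1 and B^(m)_T = x · B^(m)_{T_L} · Δ(B^(m)_{T_{R_1}} · Δ(B^(m)_{T_{R_2}} · ⋯ · Δ(B^(m)_{T_{R_m}}) ⋯)) ∈ ℤ[x]. Then for every k ≥ 0, the coefficient of x^k in B^(m)_T(x) equals the number of m-binary trees T' with T' ≤ T in the Tamari order whose leftmost branch contains exactly k nodes. In particular, B^(m)_T(1) equals the number of m-binary trees T' with T' ≤ T, i.e., the number of elements below T in the m-Tamari lattice. -/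

import Mathlib

/-- Planar binary trees: empty, or a node with a left and a right subtree. -/
inductive BinTree : Type where
  | leaf : BinTree
  | node : BinTree → BinTree → BinTree
  deriving DecidableEq

namespace BinTree

/-- Size: number of internal nodes. -/
def size : BinTree → ℕ
  | leaf => 0
  | node l r => l.size + r.size + 1

/-- `sub T o a b` : in the binary-search-tree labelling of `T` shifted by `o`
(its labels are `o+1, …, o+T.size`), the node labelled `a` lies in the subtree
rooted at the node labelled `b`, i.e. `a ⊴_T b`. -/
def sub : BinTree → ℕ → ℕ → ℕ → Prop
  | leaf, _, _, _ => False
  | node l r, o, a, b =>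
      (b = o + l.size + 1 ∧ o + 1 ≤ a ∧ a ≤ o + l.size + r.size + 1) ∨
      l.sub o a b ∨ r.sub (o + l.size + 1) a b

/-- One right rotation, applied at any position of the tree. -/
inductive Rot : BinTree → BinTree → Prop
  | base (A B C : BinTree) : Rot (node (node A B) C) (node A (node B C))
  | left {l l' : BinTree} (r : BinTree) : Rot l l' → Rot (node l r) (node l' r)
  | right (l : BinTree) {r r' : BinTree} : Rot r r' → Rot (node l r) (node l r')

end BinTree

/-- Tamari order: reflexive-transitive closure of right rotation. -/
def tamariLE : BinTree → BinTree → Prop := Relation.ReflTransGen BinTree.Rot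

/-- `incRel T a c` : `a` is below `c` in the initial forest `inc T`. -/
def incRel (T : BinTree) (a c : ℕ) : Prop := a < c ∧ T.sub 0 a c

/-- `decRel T c a` : `c` is below `a` in the final forest `dec T`. -/
def decRel (T : BinTree) (c a : ℕ) : Prop := a < c ∧ T.sub 0 c a

/-- Graft the tree `B` at the leftmost leaf of `S` (as left child of the
leftmost node of `S`; if `S` is empty the result is `B`). -/
def graftL : BinTree → BinTree → BinTree
  | BinTree.leaf, B => B
  | BinTree.node l r, B => BinTree.node (graftL l B) r

/-- Auxiliary construction: from `[T_{R_i}, …, T_{R_m}]`, the subtree rooted at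
the `i`-th new node `x` (empty left child, right subtree `T_{R_i}` with the
next new node grafted at its leftmost leaf). -/
def buildAux : List BinTree → BinTree
  | [] => BinTree.leaf
  | S :: rest => BinTree.node BinTree.leaf (graftL S (buildAux rest))

/-- The right subtree of the root of an `m`-binary tree built from
`[T_{R_1}, …, T_{R_m}]`: it is `T_{R_1}` with, grafted at its leftmost leaf, a
new node carrying `T_{R_2}` (with, grafted at the leftmost leaf of `T_{R_2}`, a
new node carrying `T_{R_3}`, and so on). -/
def buildRight : List BinTree → BinTree
  | [] => BinTree.leaf
  | S :: rest => graftL S (buildAux rest)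

/-- `m`-binary trees, defined recursively: the empty tree, or a root whose left
subtree is an `m`-binary tree `T_L` and whose right subtree is built from a
list `[T_{R_1}, …, T_{R_m}]` of `m`-binary trees by the grafting procedure. -/
inductive IsMBinary (m : ℕ) : BinTree → Prop
  | leaf : IsMBinary m BinTree.leaf
  | node (TL : BinTree) (TRs : List BinTree) :
      TRs.length = m → IsMBinary m TL → (∀ S ∈ TRs, IsMBinary m S) →
      IsMBinary m (BinTree.node TL (buildRight TRs))

/-- A chain of `k` nodes linked by right edges. -/
def rightChain : ℕ → BinTree
  | 0 => BinTree.leaf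
  | k + 1 => BinTree.node BinTree.leaf (rightChain k)

/-- The `(n,m)`-comb: `n` nodes on the leftmost branch, each carrying as right
subtree a chain of `m − 1` nodes linked by right edges. -/
def comb (m : ℕ) : ℕ → BinTree
  | 0 => BinTree.leaf
  | n + 1 => BinTree.node (comb m n) (rightChain (m - 1))

/-- The condition `i·m ⊴_T i·m−1 ⊴_T ⋯ ⊴_T (i−1)·m+1` for all `1 ≤ i ≤ n`,
stated on consecutive labels. -/
def mCond (m n : ℕ) (T : BinTree) : Prop :=
  ∀ i j, 1 ≤ i → i ≤ n → 1 ≤ j → j < m → T.sub 0 (i * m - j + 1) (i * m - j)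

/-- `Δ(g) = (x·g(x) − g(1)) / (x − 1)`, an exact polynomial division. -/
noncomputable def polyDelta (g : Polynomial ℤ) : Polynomial ℤ :=
  Polynomial.divByMonic (Polynomial.X * g - Polynomial.C (g.eval 1))
    (Polynomial.X - Polynomial.C 1)

/-- `nestedDelta [g₁, …, g_m] = Δ(g₁·Δ(g₂· ⋯ ·Δ(g_m)⋯))`. -/
noncomputable def nestedDelta : List (Polynomial ℤ) → Polynomial ℤ
  | [] => 1
  | g :: gs => polyDelta (g * nestedDelta gs)

/-- Number of nodes on the leftmost branch. -/
def leftDepth : BinTree → ℕ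
  | BinTree.leaf => 0
  | BinTree.node l _ => leftDepth l + 1

/-!
Every tree below `node L R` in the Tamari order arises in exactly one way by choosing
`L₀ ≤ L`, `R₀ ≤ R` and inserting a new node with left subtree `L₀` at depth `k` of the leftmost
branch of `R₀`; its leftmost branch then has `leftDepth L₀ + 1 + k` nodes, and summing `x ^ k`
over the admissible `k` is exactly what `Δ` does. Likewise, the trees below a grafting
`graftL S B` are the graftings of trees below `S` and `B`. Whether such a tree is `m`-binary can
be read off the right subtrees hanging from its leftmost branch, which turns the admissible
depths `k` into an interval. Induction along the construction of `m`-binary trees then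
identifies `B^(m)_T` with the generating polynomial, by length of the leftmost branch, of the
`m`-binary trees below `T`.
-/

namespace BinTree

def spine : BinTree → List BinTree
  | leaf => []
  | node l r => r :: spine l

def ofSpine : List BinTree → BinTree
  | [] => leaf
  | r :: rs => node (ofSpine rs) r

def leftDescend : BinTree → ℕ → BinTree
  | T, 0 => T
  | leaf, _ + 1 => leaf
  | node l _, k + 1 => leftDescend l k

def insertLeft : ℕ → BinTree → BinTree → BinTree
  | 0, L, R => node L R
  | _ + 1, L, leaf => node L leaf
  | k + 1, L, node A C => node (insertLeft k L A) C

@[simp] lemma spine_leaf : spine leaf = [] := rfl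

@[simp] lemma spine_node (l r : BinTree) : spine (node l r) = r :: spine l := rfl

lemma ofSpine_spine (T : BinTree) : ofSpine (spine T) = T := by
  induction T with
  | leaf => rfl
  | node l r ih => rw [spine_node, ofSpine, ih]

lemma spine_ofSpine (rs : List BinTree) : spine (ofSpine rs) = rs := by
  induction rs with
  | nil => rfl
  | cons r rs ih => rw [ofSpine, spine_node, ih]

lemma spine_injective : Function.Injective spine :=
  Function.LeftInverse.injective ofSpine_spine

lemma leftDepth_eq_length_spine (T : BinTree) : leftDepth T = (spine T).length := by
  induction T with
  | leaf => rfl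
  | node l r ih => simp [leftDepth, ih]

@[simp] lemma spine_graftL (S B : BinTree) : spine (graftL S B) = spine S ++ spine B := by
  induction S with
  | leaf => rfl
  | node l r ih => simp [graftL, ih]

lemma leftDepth_graftL (S B : BinTree) :
    leftDepth (graftL S B) = leftDepth S + leftDepth B := by
  simp [leftDepth_eq_length_spine]

lemma graftL_leaf (S : BinTree) : graftL S leaf = S :=
  spine_injective (by simp)

lemma spine_leftDescend (T : BinTree) (k : ℕ) :
    spine (leftDescend T k) = (spine T).drop k := by
  induction T generalizing k with
  | leaf => cases k <;> rfl
  | node l r ih => cases k <;> simp [leftDescend, ih]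

lemma spine_insertLeft (L : BinTree) {k : ℕ} {R : BinTree} (hk : k ≤ leftDepth R) :
    spine (insertLeft k L R) = (spine R).take k ++ leftDescend R k :: spine L := by
  induction k generalizing R with
  | zero => simp [insertLeft, leftDescend]
  | succ k ih =>
    cases R with
    | leaf => simp [leftDepth] at hk
    | node A C => simp [insertLeft, leftDescend, ih (by simpa [leftDepth] using hk)]

lemma leftDepth_insertLeft (L : BinTree) {k : ℕ} {R : BinTree} (hk : k ≤ leftDepth R) :
    leftDepth (insertLeft k L R) = leftDepth L + 1 + k := by
  rw [leftDepth_eq_length_spine] at hk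
  simp [leftDepth_eq_length_spine, spine_insertLeft L (leftDepth_eq_length_spine R ▸ hk), hk]
  omega

lemma eq_leaf_of_size_eq_zero {T : BinTree} (h : T.size = 0) : T = leaf := by
  cases T with
  | leaf => rfl
  | node l r => simp [size] at h

lemma size_insertLeft (L : BinTree) {k : ℕ} {R : BinTree} (hk : k ≤ leftDepth R) :
    (insertLeft k L R).size = L.size + R.size + 1 := by
  induction k generalizing R with
  | zero => rfl
  | succ k ih =>
    cases R with
    | leaf => simp [leftDepth] at hk
    | node A C => simp only [insertLeft, size, ih (by simpa [leftDepth] using hk)]; ring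

lemma graftL_inj {S S' B B' : BinTree} (hS : S.size = S'.size)
    (h : graftL S B = graftL S' B') : S = S' ∧ B = B' := by
  induction S generalizing S' with
  | leaf =>
    cases S' with
    | leaf => exact ⟨rfl, h⟩
    | node => simp [size] at hS
  | node l r ih =>
    cases S' with
    | leaf => simp [size] at hS
    | node l' r' =>
      simp only [graftL, node.injEq] at h
      obtain ⟨h, rfl⟩ := h
      obtain ⟨rfl, rfl⟩ := ih (by simp [size] at hS; omega) h
      exact ⟨rfl, rfl⟩

lemma insertLeft_inj : ∀ {k k' : ℕ} {L L' R R' : BinTree}, k ≤ leftDepth R →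
    k' ≤ leftDepth R' → L.size = L'.size → insertLeft k L R = insertLeft k' L' R' →
    k = k' ∧ L = L' ∧ R = R'
  | 0, 0, _, _, _, _, _, _, _, h => by simpa [insertLeft] using h
  | 0, _ + 1, L, L', R, leaf, _, hk', _, _ => by simp [leftDepth] at hk'
  | k + 1, _, L, L', leaf, R', hk, _, _, _ => by simp [leftDepth] at hk
  | 0, k' + 1, L, L', R, node A' C', _, hk', hL, h => by
    simp only [insertLeft, node.injEq] at h
    have := size_insertLeft L' (R := A') (by simpa [leftDepth] using hk')
    rw [← h.1] at this
    omega
  | k + 1, 0, L, L', node A C, R', hk, _, hL, h => by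
    simp only [insertLeft, node.injEq] at h
    have := size_insertLeft L (R := A) (by simpa [leftDepth] using hk)
    rw [h.1] at this
    omega
  | k + 1, k' + 1, L, L', node A C, node A' C', hk, hk', hL, h => by
    simp only [insertLeft, node.injEq] at h
    obtain ⟨rfl, rfl, rfl⟩ :=
      insertLeft_inj (by simpa [leftDepth] using hk) (by simpa [leftDepth] using hk') hL h.1
    exact ⟨rfl, rfl, by rw [h.2]⟩

end BinTree

open BinTree

namespace BinTree.Rot

lemma size_eq {T U : BinTree} (h : Rot T U) : T.size = U.size := by
  induction h with
  | base => simp only [size]; ring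
  | left r _ ih => simp [size, ih]
  | right l _ ih => simp [size, ih]

lemma graftL_left {S' S : BinTree} (B : BinTree) (h : Rot S' S) :
    Rot (graftL S' B) (graftL S B) := by
  induction h with
  | base A B₀ C => exact base (graftL A B) B₀ C
  | left r _ ih => exact left r ih
  | right l h _ => exact right _ h

lemma graftL_right (S : BinTree) {B' B : BinTree} (h : Rot B' B) :
    Rot (graftL S B') (graftL S B) := by
  induction S with
  | leaf => exact h
  | node l r ih => exact left r ih

end BinTree.Rot

namespace tamariLE

lemma size_eq {T U : BinTree} (h : tamariLE T U) : T.size = U.size := by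
  induction h with
  | refl => rfl
  | tail _ h ih => rw [ih, h.size_eq]

lemma eq_leaf {T : BinTree} (h : tamariLE T leaf) : T = leaf :=
  eq_leaf_of_size_eq_zero h.size_eq

lemma node_mono {l' l r' r : BinTree} (hl : tamariLE l' l) (hr : tamariLE r' r) :
    tamariLE (node l' r') (node l r) :=
  (hl.lift (node · r') fun _ _ => Rot.left r').trans (hr.lift (node l) fun _ _ => Rot.right l)

lemma graftL_mono {S' S B' B : BinTree} (hS : tamariLE S' S) (hB : tamariLE B' B) :
    tamariLE (graftL S' B') (graftL S B) :=
  (hS.lift (graftL · B') fun _ _ => Rot.graftL_left B').trans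
    (hB.lift (graftL S) fun _ _ => Rot.graftL_right S)

lemma insertLeft_le (L : BinTree) : ∀ {k : ℕ} {R : BinTree}, k ≤ leftDepth R →
    tamariLE (insertLeft k L R) (node L R)
  | 0, _, _ => .refl
  | _ + 1, leaf, hk => by simp [leftDepth] at hk
  | _ + 1, node A C, hk =>
    (node_mono (insertLeft_le L (by simpa [leftDepth] using hk)) .refl).tail (Rot.base L A C)

end tamariLE

namespace BinTree.Rot

lemma graftL_cases {S : BinTree} : ∀ {W B : BinTree}, Rot W (graftL S B) →
    (∃ S', Rot S' S ∧ W = graftL S' B) ∨ (∃ B', Rot B' B ∧ W = graftL S B') := by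
  induction S with
  | leaf => exact fun h => .inr ⟨_, h, rfl⟩
  | node l r ih =>
    intro W B h
    generalize hl : graftL l B = gl at h
    cases h with
    | base A B₁ C => exact .inl ⟨node (node l B₁) C, base l B₁ C, by simp [graftL, hl]⟩
    | left _ hW =>
      rcases ih hW with ⟨S', hS', rfl⟩ | ⟨B', hB', rfl⟩
      · exact .inl ⟨node S' r, left r hS', rfl⟩
      · exact .inr ⟨B', hB', rfl⟩
    | right _ hW => exact .inl ⟨node l _, right l hW, by simp [graftL, hl]⟩

/-- A rotation into `insertLeft k L R` acts inside `L` or `R`, or moves the inserted node one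
step down the leftmost branch. -/
lemma insertLeft_cases {L : BinTree} : ∀ {k : ℕ} {W R : BinTree}, k ≤ leftDepth R →
    Rot W (insertLeft k L R) →
    ∃ k' L' R', tamariLE L' L ∧ tamariLE R' R ∧ k' ≤ leftDepth R' ∧ W = insertLeft k' L' R'
  | 0, W, R, _, h => by
    cases h with
    | base A B C => exact ⟨1, L, node B C, .refl, .refl, by simp [leftDepth], rfl⟩
    | left _ hW => exact ⟨0, _, R, .single hW, .refl, Nat.zero_le _, rfl⟩
    | right _ hW => exact ⟨0, L, _, .refl, .single hW, Nat.zero_le _, rfl⟩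
  | _ + 1, _, leaf, hk, _ => by simp [leftDepth] at hk
  | k + 1, W, node A C, hk, h => by
    have hA : k ≤ leftDepth A := by simpa [leftDepth] using hk
    generalize hl : insertLeft k L A = gl at h
    cases h with
    | base A₀ B C₁ =>
      refine ⟨k + 2, L, node (node A B) C₁, .refl, .single (base A B C₁),
        by simp [leftDepth]; omega, ?_⟩
      simp [insertLeft, hl]
    | left _ hW =>
      obtain ⟨k', L', A', hL, hA', hk', rfl⟩ := insertLeft_cases hA hW
      exact ⟨k' + 1, L', node A' C, hL, hA'.node_mono .refl, by simp [leftDepth]; omega, rfl⟩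
    | right _ hW =>
      exact ⟨k + 1, L, node A _, .refl, tamariLE.node_mono .refl (.single hW),
        by simp [leftDepth]; omega, by simp [insertLeft, hl]⟩

end BinTree.Rot

lemma tamariLE_graftL_iff {W S B : BinTree} :
    tamariLE W (graftL S B) ↔ ∃ S' B', tamariLE S' S ∧ tamariLE B' B ∧ W = graftL S' B' := by
  refine ⟨fun h => ?_, fun ⟨S', B', hS, hB, hW⟩ => hW ▸ hS.graftL_mono hB⟩
  induction h using Relation.ReflTransGen.head_induction_on with
  | refl => exact ⟨S, B, .refl, .refl, rfl⟩
  | head h _ ih =>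
    obtain ⟨S', B', hS, hB, rfl⟩ := ih
    rcases h.graftL_cases with ⟨S'', h', rfl⟩ | ⟨B'', h', rfl⟩
    · exact ⟨S'', B', hS.head h', hB, rfl⟩
    · exact ⟨S', B'', hS, hB.head h', rfl⟩

lemma tamariLE_node_iff {W L R : BinTree} :
    tamariLE W (node L R) ↔ ∃ k L₀ R₀, tamariLE L₀ L ∧ tamariLE R₀ R ∧ k ≤ leftDepth R₀ ∧
      W = insertLeft k L₀ R₀ := by
  refine ⟨fun h => ?_, fun ⟨k, L₀, R₀, hL, hR, hk, hW⟩ =>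
    hW ▸ (tamariLE.insertLeft_le L₀ hk).trans (hL.node_mono hR)⟩
  induction h using Relation.ReflTransGen.head_induction_on with
  | refl => exact ⟨0, L, R, .refl, .refl, Nat.zero_le _, rfl⟩
  | head h _ ih =>
    obtain ⟨k, L₀, R₀, hL, hR, hk, rfl⟩ := ih
    obtain ⟨k', L', R', hL', hR', hk', rfl⟩ := h.insertLeft_cases hk
    exact ⟨k', L', R', hL'.trans hL, hR'.trans hR, hk', rfl⟩

/-- For `t = m`, the right subtrees of the roots of `m`-binary trees. -/
def IsRightPart (m t : ℕ) (R : BinTree) : Prop :=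
  ∃ l : List BinTree, l.length = t ∧ (∀ S ∈ l, IsMBinary m S) ∧ R = buildRight l

lemma buildRight_singleton (S : BinTree) : buildRight [S] = S := graftL_leaf S

lemma buildRight_cons_cons (S S₂ : BinTree) (l : List BinTree) :
    buildRight (S :: S₂ :: l) = graftL S (node leaf (buildRight (S₂ :: l))) := rfl

lemma buildRight_inj : ∀ {l l' : List BinTree}, l.length = l'.length →
    buildRight l = buildRight l' → l = l'
  | [], [], _, _ => rfl
  | [S], [S'], _, h => by rwa [buildRight_singleton, buildRight_singleton, ← List.singleton_inj] at h
  | S :: S₂ :: l, S' :: S₂' :: l', hl, h => by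
    have h' := congrArg spine h
    simp only [buildRight_cons_cons, spine_graftL, spine_node, spine_leaf] at h'
    obtain ⟨hS, hR⟩ := List.append_inj' h' rfl
    rw [spine_injective hS, buildRight_inj (by simpa using hl) (List.singleton_inj.mp hR)]

lemma isRightPart_one_iff {m : ℕ} {R : BinTree} : IsRightPart m 1 R ↔ IsMBinary m R := by
  constructor
  · rintro ⟨l, hl, hS, rfl⟩
    obtain ⟨S, rfl⟩ := List.length_eq_one_iff.mp hl
    simpa [buildRight_singleton] using hS
  · exact fun h => ⟨[R], rfl, by simpa using h, (buildRight_singleton R).symm⟩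

lemma isMBinary_iff_forall_spine {m : ℕ} {T : BinTree} :
    IsMBinary m T ↔ ∀ r ∈ spine T, IsRightPart m m r := by
  constructor
  · intro h
    induction h with
    | leaf => simp
    | node TL TRs hl _ hTRs ih => simpa using ⟨⟨TRs, hl, hTRs, rfl⟩, ih⟩
  · induction T with
    | leaf => exact fun _ => .leaf
    | node l r ih =>
      simp only [spine_node, List.forall_mem_cons]
      rintro ⟨⟨TRs, hl, hTRs, rfl⟩, h⟩
      exact .node l TRs hl (ih h) hTRs

lemma isRightPart_succ_iff {m t : ℕ} (ht : 1 ≤ t) {R : BinTree} :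
    IsRightPart m (t + 1) R ↔
      ∃ ys r, spine R = ys ++ [r] ∧ (∀ y ∈ ys, IsRightPart m m y) ∧ IsRightPart m t r := by
  constructor
  · rintro ⟨_ | ⟨S, _ | ⟨S₂, l⟩⟩, hl, hS, rfl⟩
    · simp at hl
    · simp at hl; omega
    · refine ⟨spine S, buildRight (S₂ :: l), by simp [buildRight_cons_cons], ?_,
        ⟨S₂ :: l, by simpa using hl, fun x hx => hS x (by simp [hx]), rfl⟩⟩
      exact isMBinary_iff_forall_spine.mp (hS S (by simp))
  · rintro ⟨ys, r, hR, hys, _ | ⟨S₂, l⟩, hl, hS, rfl⟩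
    · simp at hl; omega
    · refine ⟨ofSpine ys :: S₂ :: l, by simpa using hl, ?_, spine_injective ?_⟩
      · simp only [List.forall_mem_cons] at hS ⊢
        exact ⟨isMBinary_iff_forall_spine.mpr (by rwa [spine_ofSpine]), hS⟩
      · simp [hR, buildRight_cons_cons, spine_ofSpine]

/-- `leftDescend R k` stays a right part of the same length exactly for `k ≤ rightWeight t R`:
for `t ≥ 2` right parts are nonempty, so the bottom of the leftmost branch cannot be passed. -/
def rightWeight (t : ℕ) (R : BinTree) : ℕ := if 2 ≤ t then leftDepth R - 1 else leftDepth R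

lemma rightWeight_le (t : ℕ) (R : BinTree) : rightWeight t R ≤ leftDepth R := by
  unfold rightWeight; split_ifs <;> omega

lemma forall_take_spine_and_isRightPart_leftDescend_iff {m t k : ℕ} {Y : BinTree} (ht : 1 ≤ t)
    (hk : k ≤ leftDepth Y) :
    ((∀ y ∈ (spine Y).take k, IsRightPart m m y) ∧ IsRightPart m t (leftDescend Y k)) ↔
      IsRightPart m t Y ∧ k ≤ rightWeight t Y := by
  rw [leftDepth_eq_length_spine] at hk
  obtain rfl | ⟨t, rfl, ht'⟩ : t = 1 ∨ ∃ t', t = t' + 1 ∧ 1 ≤ t' := by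
    rcases Nat.lt_or_ge t 2 with h | h
    · exact .inl (by omega)
    · exact .inr ⟨t - 1, by omega, by omega⟩
  · simp only [isRightPart_one_iff, isMBinary_iff_forall_spine, spine_leftDescend, rightWeight,
      if_neg (by omega : ¬ 2 ≤ 1), leftDepth_eq_length_spine, hk, and_true]
    rw [← List.forall_mem_append, List.take_append_drop]
  · simp only [isRightPart_succ_iff ht', spine_leftDescend, rightWeight,
      if_pos (by omega : 2 ≤ t + 1), leftDepth_eq_length_spine]
    constructor
    · rintro ⟨htake, ys, r, hdrop, hys, hr⟩
      have hY : spine Y = ((spine Y).take k ++ ys) ++ [r] := by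
        rw [List.append_assoc, ← hdrop, List.take_append_drop]
      refine ⟨⟨_, r, hY, List.forall_mem_append.mpr ⟨htake, hys⟩, hr⟩, ?_⟩
      have := congrArg List.length hY
      simp at this
      omega
    · rintro ⟨⟨ys, r, hY, hys, hr⟩, hk'⟩
      have hlen : k ≤ ys.length := by simp [hY] at hk'; omega
      rw [hY, List.take_append_of_le_length hlen, List.drop_append_of_le_length hlen]
      exact ⟨fun y hy => hys y (List.mem_of_mem_take hy), ys.drop k, r, rfl,
        fun y hy => hys y (List.mem_of_mem_drop hy), hr⟩

lemma isMBinary_insertLeft_iff {m k : ℕ} (hm : 1 ≤ m) {L R : BinTree} (hk : k ≤ leftDepth R) :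
    IsMBinary m (insertLeft k L R) ↔
      IsMBinary m L ∧ IsRightPart m m R ∧ k ≤ rightWeight m R := by
  rw [← forall_take_spine_and_isRightPart_leftDescend_iff hm hk, isMBinary_iff_forall_spine,
    isMBinary_iff_forall_spine, spine_insertLeft L hk]
  simp only [List.forall_mem_append, List.forall_mem_cons]
  tauto

lemma isRightPart_succ_insertLeft_leaf_iff {m t k : ℕ} (ht : 1 ≤ t) {R : BinTree}
    (hk : k ≤ leftDepth R) :
    IsRightPart m (t + 1) (insertLeft k leaf R) ↔ IsRightPart m t R ∧ k ≤ rightWeight t R := by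
  rw [← forall_take_spine_and_isRightPart_leftDescend_iff ht hk, isRightPart_succ_iff ht,
    spine_insertLeft leaf hk, spine_leaf]
  constructor
  · rintro ⟨ys, r, h, hys, hr⟩
    obtain ⟨rfl, hr'⟩ := List.append_inj' h rfl
    exact ⟨hys, List.singleton_inj.mp hr' ▸ hr⟩
  · exact fun h => ⟨_, _, rfl, h⟩

lemma isRightPart_graftL_iff {m t : ℕ} (ht : 2 ≤ t) {S B : BinTree} (hB : B ≠ leaf) :
    IsRightPart m t (graftL S B) ↔ IsMBinary m S ∧ IsRightPart m t B := by
  obtain ⟨t, rfl⟩ : ∃ t', t = t' + 1 := ⟨t - 1, by omega⟩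
  obtain ⟨zs, z, hz⟩ : ∃ zs z, spine B = zs ++ [z] := by
    simpa using (List.eq_nil_or_concat (spine B)).resolve_left fun h => hB (spine_injective h)
  rw [isRightPart_succ_iff (by omega), isRightPart_succ_iff (by omega), isMBinary_iff_forall_spine,
    spine_graftL, hz, ← List.append_assoc]
  constructor
  · rintro ⟨ys, r, h, hys, hr⟩
    obtain ⟨rfl, hr'⟩ := List.append_inj' h rfl
    rw [List.forall_mem_append] at hys
    exact ⟨hys.1, zs, z, rfl, hys.2, List.singleton_inj.mp hr' ▸ hr⟩
  · rintro ⟨hS, ys, r, h, hys, hr⟩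
    obtain ⟨rfl, hr'⟩ := List.append_inj' h rfl
    exact ⟨_, _, rfl, List.forall_mem_append.mpr ⟨hS, hys⟩, List.singleton_inj.mp hr' ▸ hr⟩

lemma finite_setOf_size_le (n : ℕ) : {T : BinTree | T.size ≤ n}.Finite := by
  induction n with
  | zero => exact (Set.finite_singleton leaf).subset fun T hT => eq_leaf_of_size_eq_zero (by simpa using hT)
  | succ n ih =>
    refine ((ih.image2 node ih).insert leaf).subset ?_
    rintro (_ | ⟨l, r⟩) hT
    · exact Set.mem_insert _ _
    · simp only [Set.mem_ofPred_eq, size] at hT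
      exact Set.mem_insert_of_mem _ ⟨l, by simp; omega, r, by simp; omega, rfl⟩

noncomputable def lowerFinset (p : BinTree → Prop) (T : BinTree) : Finset BinTree :=
  ((finite_setOf_size_le T.size).subset fun _ h => h.2.size_eq.le :
    {T' | p T' ∧ tamariLE T' T}.Finite).toFinset

lemma coe_lowerFinset (p : BinTree → Prop) (T : BinTree) :
    (lowerFinset p T : Set BinTree) = {T' | p T' ∧ tamariLE T' T} :=
  Set.Finite.coe_toFinset _

lemma mem_lowerFinset {p : BinTree → Prop} {T T' : BinTree} :
    T' ∈ lowerFinset p T ↔ p T' ∧ tamariLE T' T :=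
  Set.Finite.mem_toFinset _

lemma lowerFinset_leaf {p : BinTree → Prop} (h : p leaf) : lowerFinset p leaf = {leaf} := by
  ext T
  rw [mem_lowerFinset, Finset.mem_singleton]
  exact ⟨fun hT => hT.2.eq_leaf, by rintro rfl; exact ⟨h, .refl⟩⟩

section Sums

variable {M : Type*} [AddCommMonoid M]

lemma sum_lowerFinset_graftL {p pS pB : BinTree → Prop} {S B : BinTree}
    (hp : ∀ S' B', tamariLE S' S → tamariLE B' B → (p (graftL S' B') ↔ pS S' ∧ pB B'))
    (f : BinTree → M) :
    ∑ W ∈ lowerFinset p (graftL S B), f W =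
      ∑ S' ∈ lowerFinset pS S, ∑ B' ∈ lowerFinset pB B, f (graftL S' B') := by
  rw [← Finset.sum_product']
  symm
  refine Finset.sum_bij (fun x _ => graftL x.1 x.2) ?_ ?_ ?_ fun _ _ => rfl
  · rintro ⟨S', B'⟩ h
    simp only [Finset.mem_product, mem_lowerFinset] at h ⊢
    exact ⟨(hp S' B' h.1.2 h.2.2).2 ⟨h.1.1, h.2.1⟩, h.1.2.graftL_mono h.2.2⟩
  · rintro ⟨S₁, B₁⟩ h₁ ⟨S₂, B₂⟩ h₂ h
    simp only [Finset.mem_product, mem_lowerFinset] at h₁ h₂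
    obtain ⟨rfl, rfl⟩ := graftL_inj (h₁.1.2.size_eq.trans h₂.1.2.size_eq.symm) h
    rfl
  · intro W hW
    rw [mem_lowerFinset] at hW
    obtain ⟨S', B', hS', hB', rfl⟩ := tamariLE_graftL_iff.mp hW.2
    obtain ⟨hpS, hpB⟩ := (hp S' B' hS' hB').1 hW.1
    exact ⟨(S', B'), Finset.mem_product.mpr ⟨mem_lowerFinset.mpr ⟨hpS, hS'⟩,
      mem_lowerFinset.mpr ⟨hpB, hB'⟩⟩, rfl⟩

lemma sum_lowerFinset_node {p pL pR : BinTree → Prop} {L R : BinTree} (w : BinTree → ℕ)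
    (hw : ∀ R₀, w R₀ ≤ leftDepth R₀)
    (hp : ∀ k L₀ R₀, tamariLE L₀ L → k ≤ leftDepth R₀ →
      (p (insertLeft k L₀ R₀) ↔ pL L₀ ∧ pR R₀ ∧ k ≤ w R₀))
    (f : BinTree → M) :
    ∑ W ∈ lowerFinset p (node L R), f W =
      ∑ L₀ ∈ lowerFinset pL L, ∑ R₀ ∈ lowerFinset pR R, ∑ k ∈ Finset.range (w R₀ + 1),
        f (insertLeft k L₀ R₀) := by
  simp only [Finset.sum_sigma']
  symm
  refine Finset.sum_bij (fun x _ => insertLeft x.2.2 x.1 x.2.1) ?_ ?_ ?_ fun _ _ => rfl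
  · rintro ⟨L₀, R₀, k⟩ h
    simp only [Finset.mem_sigma, mem_lowerFinset, Finset.mem_range] at h ⊢
    have hk : k ≤ leftDepth R₀ := (Nat.le_of_lt_succ h.2.2).trans (hw R₀)
    exact ⟨(hp k L₀ R₀ h.1.2 hk).2 ⟨h.1.1, h.2.1.1, Nat.le_of_lt_succ h.2.2⟩,
      (tamariLE.insertLeft_le L₀ hk).trans (h.1.2.node_mono h.2.1.2)⟩
  · rintro ⟨L₁, R₁, k₁⟩ h₁ ⟨L₂, R₂, k₂⟩ h₂ h
    simp only [Finset.mem_sigma, mem_lowerFinset, Finset.mem_range] at h₁ h₂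
    obtain ⟨rfl, rfl, rfl⟩ := insertLeft_inj ((Nat.le_of_lt_succ h₁.2.2).trans (hw R₁))
      ((Nat.le_of_lt_succ h₂.2.2).trans (hw R₂)) (h₁.1.2.size_eq.trans h₂.1.2.size_eq.symm) h
    rfl
  · intro W hW
    rw [mem_lowerFinset] at hW
    obtain ⟨k, L₀, R₀, hL, hR, hk, rfl⟩ := tamariLE_node_iff.mp hW.2
    obtain ⟨hpL, hpR, hkw⟩ := (hp k L₀ R₀ hL hk).1 hW.1
    refine ⟨⟨L₀, R₀, k⟩, ?_, rfl⟩
    simp only [Finset.mem_sigma, mem_lowerFinset, Finset.mem_range]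
    exact ⟨⟨hpL, hL⟩, ⟨hpR, hR⟩, Nat.lt_succ_of_le hkw⟩

end Sums

open Polynomial

lemma polyDelta_sum_X_pow {ι : Type*} (s : Finset ι) (f : ι → ℕ) :
    polyDelta (∑ u ∈ s, X ^ f u) = ∑ u ∈ s, ∑ k ∈ Finset.range (f u + 1), (X : ℤ[X]) ^ k := by
  rw [polyDelta, ← mul_divByMonic_cancel_left (∑ u ∈ s, ∑ k ∈ Finset.range (f u + 1), X ^ k)
    (monic_X_sub_C (1 : ℤ))]
  have hgeo (n : ℕ) : (X - C 1) * ∑ k ∈ Finset.range (n + 1), (X : ℤ[X]) ^ k = X * X ^ n - 1 := by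
    rw [C_1, mul_geom_sum, pow_succ']
  congr 1
  rw [eval_finsetSum, map_sum, Finset.mul_sum, Finset.mul_sum, ← Finset.sum_sub_distrib]
  refine Finset.sum_congr rfl fun u _ => ?_
  rw [hgeo]
  simp

noncomputable def intervalPoly (m : ℕ) (T : BinTree) : ℤ[X] :=
  ∑ T' ∈ lowerFinset (IsMBinary m) T, X ^ leftDepth T'

noncomputable def rightPoly (m : ℕ) (l : List BinTree) : ℤ[X] :=
  ∑ R ∈ lowerFinset (IsRightPart m l.length) (buildRight l), X ^ rightWeight l.length R

lemma intervalPoly_leaf (m : ℕ) : intervalPoly m leaf = 1 := by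
  simp [intervalPoly, lowerFinset_leaf IsMBinary.leaf, leftDepth]

lemma intervalPoly_node_buildRight {m : ℕ} (hm : 1 ≤ m) (L : BinTree) {l : List BinTree}
    (hl : l.length = m) :
    intervalPoly m (node L (buildRight l)) = X * intervalPoly m L * polyDelta (rightPoly m l) := by
  rw [intervalPoly, sum_lowerFinset_node (rightWeight m) (rightWeight_le m)
    (fun _ _ _ _ hk => isMBinary_insertLeft_iff hm hk), rightPoly, hl, polyDelta_sum_X_pow,
    intervalPoly, mul_assoc, Finset.sum_mul, Finset.mul_sum]
  refine Finset.sum_congr rfl fun L₀ _ => ?_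
  rw [Finset.mul_sum, Finset.mul_sum]
  refine Finset.sum_congr rfl fun R₀ _ => ?_
  rw [Finset.mul_sum, Finset.mul_sum]
  refine Finset.sum_congr rfl fun k hk => ?_
  rw [leftDepth_insertLeft L₀
    ((Nat.le_of_lt_succ (Finset.mem_range.mp hk)).trans (rightWeight_le m R₀))]
  ring

lemma rightPoly_singleton (m : ℕ) (S : BinTree) : rightPoly m [S] = intervalPoly m S := by
  simp only [rightPoly, intervalPoly, List.length_singleton, buildRight_singleton, rightWeight,
    Nat.not_ofNat_le_one, if_false]
  congr
  exact funext fun _ => propext isRightPart_one_iff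

lemma rightPoly_cons_cons (m : ℕ) (S S₂ : BinTree) (l : List BinTree) :
    rightPoly m (S :: S₂ :: l) = intervalPoly m S * polyDelta (rightPoly m (S₂ :: l)) := by
  have hp (S' B' : BinTree) (hB' : tamariLE B' (node leaf (buildRight (S₂ :: l)))) :
      IsRightPart m (l.length + 2) (graftL S' B') ↔
        IsMBinary m S' ∧ IsRightPart m (l.length + 2) B' :=
    isRightPart_graftL_iff (by omega) fun h => by simpa [h, size] using hB'.size_eq
  rw [rightPoly, List.length_cons, List.length_cons, buildRight_cons_cons,
    sum_lowerFinset_graftL (fun S' B' _ hB' => hp S' B' hB'), rightPoly, polyDelta_sum_X_pow,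
    intervalPoly, Finset.sum_mul]
  refine Finset.sum_congr rfl fun S' _ => ?_
  rw [sum_lowerFinset_node (pL := fun _ => True) (rightWeight (l.length + 1))
    (rightWeight_le _) fun k L₀ R₀ hL₀ hk => ?_, lowerFinset_leaf trivial, Finset.sum_singleton,
    Finset.mul_sum]
  · refine Finset.sum_congr rfl fun R₀ _ => ?_
    rw [Finset.mul_sum]
    refine Finset.sum_congr rfl fun k hk => ?_
    rw [rightWeight, if_pos (by omega), leftDepth_graftL, leftDepth_insertLeft leaf
      ((Nat.le_of_lt_succ (Finset.mem_range.mp hk)).trans (rightWeight_le _ R₀)), leftDepth,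
      ← pow_add]
    congr 1
    omega
  · rw [hL₀.eq_leaf, true_and]
    exact isRightPart_succ_insertLeft_leaf_iff (by omega) hk

lemma rightPoly_cons (m : ℕ) (S : BinTree) (l : List BinTree) :
    rightPoly m (S :: l) = intervalPoly m S * nestedDelta (l.map (intervalPoly m)) := by
  induction l generalizing S with
  | nil => rw [rightPoly_singleton, List.map_nil, nestedDelta, mul_one]
  | cons S₂ l ih => rw [rightPoly_cons_cons, ih, List.map_cons, nestedDelta]

lemma intervalPoly_node {m : ℕ} (hm : 1 ≤ m) (L : BinTree) {l : List BinTree}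
    (hl : l.length = m) :
    intervalPoly m (node L (buildRight l)) =
      X * intervalPoly m L * nestedDelta (l.map (intervalPoly m)) := by
  obtain _ | ⟨S, l⟩ := l
  · simp at hl; omega
  · rw [intervalPoly_node_buildRight hm L hl, rightPoly_cons, List.map_cons, nestedDelta]

lemma coeff_intervalPoly (m : ℕ) (T : BinTree) (k : ℕ) :
    (intervalPoly m T).coeff k =
      ({T' | IsMBinary m T' ∧ tamariLE T' T ∧ leftDepth T' = k}.ncard : ℤ) := by
  simp only [intervalPoly, finsetSum_coeff, coeff_X_pow, Finset.sum_boole]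
  rw [← Set.ncard_coe_finset]
  congr
  ext T'
  simp [mem_lowerFinset, eq_comm, and_assoc]

lemma eval_one_intervalPoly (m : ℕ) (T : BinTree) :
    (intervalPoly m T).eval 1 = ({T' | IsMBinary m T' ∧ tamariLE T' T}.ncard : ℤ) := by
  simp [intervalPoly, eval_finsetSum, ← coe_lowerFinset]

lemma IsMBinary.existsUnique_decomposition {m : ℕ} {T : BinTree} (hT : IsMBinary m T)
    (hne : T ≠ BinTree.leaf) :
    ∃! p : BinTree × List BinTree, p.2.length = m ∧ IsMBinary m p.1 ∧
      (∀ S ∈ p.2, IsMBinary m S) ∧ T = BinTree.node p.1 (buildRight p.2) := by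
  obtain _ | ⟨TL, TRs, hl, hTL, hTRs⟩ := hT
  · exact absurd rfl hne
  refine ⟨(TL, TRs), ⟨hl, hTL, hTRs, rfl⟩, ?_⟩
  rintro ⟨TL', TRs'⟩ ⟨hl', -, -, h⟩
  simp only [BinTree.node.injEq] at h
  rw [h.1, buildRight_inj (hl.trans hl'.symm) h.2]

lemma eq_intervalPoly {m : ℕ} (hm : 1 ≤ m) {B : BinTree → ℤ[X]} (hleaf : B leaf = 1)
    (hrec : ∀ (TL : BinTree) (TRs : List BinTree), TRs.length = m →
      IsMBinary m TL → (∀ S ∈ TRs, IsMBinary m S) →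
      B (node TL (buildRight TRs)) = X * B TL * nestedDelta (TRs.map B))
    {T : BinTree} (hT : IsMBinary m T) : B T = intervalPoly m T := by
  induction hT with
  | leaf => rw [hleaf, intervalPoly_leaf]
  | node TL TRs hl hTL hTRs ihL ihR =>
    rw [hrec TL TRs hl hTL hTRs, intervalPoly_node hm TL hl, ihL, List.map_congr_left ihR]

/-- Every nonempty `m`-binary tree decomposes uniquely into `m`-binary trees
`T_L, T_{R_1}, …, T_{R_m}`, so the recursion
`B^(m)_∅ = 1`, `B^(m)_T = x·B^(m)_{T_L}·Δ(B^(m)_{T_{R_1}}·Δ(⋯·Δ(B^(m)_{T_{R_m}})⋯))`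
defines `B` on `m`-binary trees; the coefficient of `x^k` in `B^(m)_T` counts
the `m`-binary trees `T' ≤ T` with `k` nodes on their leftmost branch, and
`B^(m)_T(1)` counts the elements below `T` in the `m`-Tamari lattice. -/
theorem stmt18 (m : ℕ) (hm : 1 ≤ m) (B : BinTree → Polynomial ℤ)
    (hleaf : B BinTree.leaf = 1)
    (hrec : ∀ (TL : BinTree) (TRs : List BinTree), TRs.length = m →
      IsMBinary m TL → (∀ S ∈ TRs, IsMBinary m S) →
      B (BinTree.node TL (buildRight TRs)) =
        Polynomial.X * B TL * nestedDelta (TRs.map B)) :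
    (∀ T : BinTree, IsMBinary m T → T ≠ BinTree.leaf →
      ∃! p : BinTree × List BinTree, p.2.length = m ∧ IsMBinary m p.1 ∧
        (∀ S ∈ p.2, IsMBinary m S) ∧ T = BinTree.node p.1 (buildRight p.2)) ∧
    (∀ T : BinTree, IsMBinary m T → ∀ k : ℕ,
      (B T).coeff k =
        (({T' : BinTree | IsMBinary m T' ∧ tamariLE T' T ∧
            leftDepth T' = k}).ncard : ℤ) ∧
      (B T).eval 1 =
        (({T' : BinTree | IsMBinary m T' ∧ tamariLE T' T}).ncard : ℤ)) := by
  refine ⟨fun T hT hne => hT.existsUnique_decomposition hne, fun T hT k => ?_⟩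
  rw [eq_intervalPoly hm hleaf hrec hT]
  exact ⟨coeff_intervalPoly m T k, eval_one_intervalPoly m T⟩
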